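/- arXiv:2512.06959 — 5 statements merged into one kernel-verified Lean document; each statement's English description precedes it below -/
import Mathlib

section
/- Hereditary history-preserving bisimilarity implies brm-forward-reverse bisimilarity: if two stable configuration structures C₁ and C₂ are hereditary history-preserving bisimilar, then they are brm-forward-reverse bisimilar. -/
/-- A configuration structure: a set of (finite) configurations over events `E`
    together with a labeling function into actions `A`. -/
structure CS (E : Type*) (A : Type*) where
  Configs : Set (Set E)
  label : E → A

namespace CS

variable {E : Type*} {A : Type*}

/-- Stability: finiteness of configurations, rootedness, connectedness, and
    closure under bounded unions and intersections. -/
def Stable (C : CS E A) : Prop :=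
  (∀ X ∈ C.Configs, X.Finite) ∧
  ∅ ∈ C.Configs ∧
  (∀ X ∈ C.Configs, X ≠ ∅ → ∃ e ∈ X, X \ {e} ∈ C.Configs) ∧
  (∀ X ∈ C.Configs, ∀ Y ∈ C.Configs, ∀ Z ∈ C.Configs, X ∪ Y ⊆ Z →
    X ∪ Y ∈ C.Configs ∧ X ∩ Y ∈ C.Configs)

/-- `a`-labeled transition between configurations: one event labeled `a` is added. -/
def Trans (C : CS E A) (X : Set E) (a : A) (X' : Set E) : Prop :=
  X ∈ C.Configs ∧ X' ∈ C.Configs ∧ X ⊆ X' ∧ ∃ e, X' \ X = {e} ∧ C.label e = a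

/-- Causality on a configuration `X`. -/
def le (C : CS E A) (X : Set E) (e₁ e₂ : E) : Prop :=
  e₁ ∈ X ∧ e₂ ∈ X ∧ ∀ Y ∈ C.Configs, Y ⊆ X → e₂ ∈ Y → e₁ ∈ Y

/-- Strict causality. -/
def lt (C : CS E A) (X : Set E) (e₁ e₂ : E) : Prop :=
  C.le X e₁ e₂ ∧ e₁ ≠ e₂

/-- Concurrency of two distinct events in a configuration. -/
def co (C : CS E A) (X : Set E) (e₁ e₂ : E) : Prop :=
  e₁ ≠ e₂ ∧ ¬ C.lt X e₁ e₂ ∧ ¬ C.lt X e₂ e₁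

/-- Conflict of two distinct events: no configuration contains both. -/
def Conflict (C : CS E A) (e₁ e₂ : E) : Prop :=
  e₁ ≠ e₂ ∧ ¬ ∃ Z ∈ C.Configs, e₁ ∈ Z ∧ e₂ ∈ Z

/-- Backward ready multiset of a configuration, as a multiplicity function:
    the number of incoming `a`-labeled transitions. -/
noncomputable def brm (C : CS E A) (X : Set E) : A → ℕ :=
  fun a => Set.ncard {X' | C.Trans X' a X}

end CS

namespace CS

variable {E₁ E₂ : Type*} {A : Type*}

/-- A hereditary history-preserving bisimulation between two stable
configuration structures (ternary relation whose third component is a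
labeling- and causality-preserving bijection, represented as a set of pairs). -/
def IsHHPBisim (C₁ : CS E₁ A) (C₂ : CS E₂ A)
    (B : Set E₁ → Set E₂ → Set (E₁ × E₂) → Prop) : Prop :=
  B ∅ ∅ ∅ ∧
  ∀ X₁ X₂ f, B X₁ X₂ f →
    X₁ ∈ C₁.Configs ∧ X₂ ∈ C₂.Configs ∧
    -- f is a bijection from X₁ to X₂
    (∀ p ∈ f, p.1 ∈ X₁ ∧ p.2 ∈ X₂) ∧
    (∀ e₁ ∈ X₁, ∃! e₂, (e₁, e₂) ∈ f) ∧
    (∀ e₂ ∈ X₂, ∃! e₁, (e₁, e₂) ∈ f) ∧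
    -- preserving labeling
    (∀ p ∈ f, C₁.label p.1 = C₂.label p.2) ∧
    -- preserving causality
    (∀ p ∈ f, ∀ q ∈ f, (C₁.le X₁ p.1 q.1 ↔ C₂.le X₂ p.2 q.2)) ∧
    -- forward clause (and vice versa)
    (∀ a X₁', C₁.Trans X₁ a X₁' →
      ∃ X₂' f', C₂.Trans X₂ a X₂' ∧ B X₁' X₂' f' ∧ {p ∈ f' | p.1 ∈ X₁} = f) ∧
    (∀ a X₂', C₂.Trans X₂ a X₂' →
      ∃ X₁' f', C₁.Trans X₁ a X₁' ∧ B X₁' X₂' f' ∧ {p ∈ f' | p.1 ∈ X₁} = f) ∧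
    -- backward clause (and vice versa)
    (∀ a X₁', C₁.Trans X₁' a X₁ →
      ∃ X₂' f', C₂.Trans X₂' a X₂ ∧ B X₁' X₂' f' ∧ {p ∈ f | p.1 ∈ X₁'} = f') ∧
    (∀ a X₂', C₂.Trans X₂' a X₂ →
      ∃ X₁' f', C₁.Trans X₁' a X₁ ∧ B X₁' X₂' f' ∧ {p ∈ f | p.1 ∈ X₁'} = f')

/-- Hereditary history-preserving bisimilarity. -/
def HHPB (C₁ : CS E₁ A) (C₂ : CS E₂ A) : Prop := ∃ B, IsHHPBisim C₁ C₂ B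

/-- A brm-forward-reverse bisimulation between stable configuration structures. -/
def IsFRBbrmBisim (C₁ : CS E₁ A) (C₂ : CS E₂ A) (B : Set E₁ → Set E₂ → Prop) : Prop :=
  B ∅ ∅ ∧
  ∀ X₁ X₂, B X₁ X₂ →
    (∀ a X₁', C₁.Trans X₁ a X₁' → ∃ X₂', C₂.Trans X₂ a X₂' ∧ B X₁' X₂') ∧
    (∀ a X₂', C₂.Trans X₂ a X₂' → ∃ X₁', C₁.Trans X₁ a X₁' ∧ B X₁' X₂') ∧
    (∀ a X₁', C₁.Trans X₁' a X₁ → ∃ X₂', C₂.Trans X₂' a X₂ ∧ B X₁' X₂') ∧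
    (∀ a X₂', C₂.Trans X₂' a X₂ → ∃ X₁', C₁.Trans X₁' a X₁ ∧ B X₁' X₂') ∧
    C₁.brm X₁ = C₂.brm X₂

/-- Brm-forward-reverse bisimilarity. -/
def FRBbrm (C₁ : CS E₁ A) (C₂ : CS E₂ A) : Prop := ∃ B, IsFRBbrmBisim C₁ C₂ B

end CS

/-- hereditary history-preserving bisimilarity implies
brm-forward-reverse bisimilarity for stable configuration structures. -/
theorem stmt3 {E₁ E₂ A : Type*} (C₁ : CS E₁ A) (C₂ : CS E₂ A)
    (h₁ : C₁.Stable) (h₂ : C₂.Stable) (h : CS.HHPB C₁ C₂) :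
    CS.FRBbrm C₁ C₂ := by
  obtain ⟨B, hB0, hB⟩ := h
  refine ⟨fun X₁ X₂ => ∃ f, B X₁ X₂ f, ⟨∅, hB0⟩, ?_⟩
  rintro X₁ X₂ ⟨f, hf⟩
  obtain ⟨hX₁, hX₂, hdom, hex1, hex2, hlab, hcaus, hfw1, hfw2, hbw1, hbw2⟩ := hB _ _ _ hf
  -- the image map on configurations
  set g : Set E₁ → Set E₂ := fun X => {e₂ | ∃ e₁ ∈ X, (e₁, e₂) ∈ f} with hg
  -- key: matched backward configuration equals the f-image
  have key : ∀ X₁' X₂' f', B X₁' X₂' f' → {p ∈ f | p.1 ∈ X₁'} = f' → X₂' = g X₁' := by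
    intro X₁' X₂' f' hb hrestr
    obtain ⟨_, _, hdom', hex1', hex2', _⟩ := hB _ _ _ hb
    ext e₂
    constructor
    · intro he₂
      obtain ⟨e₁, he₁, _⟩ := hex2' e₂ he₂
      have : (e₁, e₂) ∈ {p ∈ f | p.1 ∈ X₁'} := hrestr ▸ he₁
      exact ⟨e₁, this.2, this.1⟩
    · rintro ⟨e₁, he₁, hpf⟩
      have : (e₁, e₂) ∈ f' := by rw [← hrestr]; exact ⟨hpf, he₁⟩
      exact (hdom' _ this).2
  refine ⟨?_, ?_, ?_, ?_, ?_⟩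
  · intro a X₁' ht
    obtain ⟨X₂', f', ht', hb', _⟩ := hfw1 a X₁' ht
    exact ⟨X₂', ht', f', hb'⟩
  · intro a X₂' ht
    obtain ⟨X₁', f', ht', hb', _⟩ := hfw2 a X₂' ht
    exact ⟨X₁', ht', f', hb'⟩
  · intro a X₁' ht
    obtain ⟨X₂', f', ht', hb', _⟩ := hbw1 a X₁' ht
    exact ⟨X₂', ht', f', hb'⟩
  · intro a X₂' ht
    obtain ⟨X₁', f', ht', hb', _⟩ := hbw2 a X₂' ht
    exact ⟨X₁', ht', f', hb'⟩
  · funext a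
    have himg : {X' | C₂.Trans X' a X₂} = g '' {X' | C₁.Trans X' a X₁} := by
      ext X₂'
      constructor
      · intro ht
        obtain ⟨X₁', f', ht', hb', hr'⟩ := hbw2 a X₂' ht
        exact ⟨X₁', ht', (key _ _ _ hb' hr').symm⟩
      · rintro ⟨X₁', ht', rfl⟩
        obtain ⟨X₂', f', ht2, hb', hr'⟩ := hbw1 a X₁' ht'
        rwa [key _ _ _ hb' hr'] at ht2
    have hinj : Set.InjOn g {X' | C₁.Trans X' a X₁} := by
      intro X' hX' X'' hX'' hgeq
      have hsub : ∀ Y Y' : Set E₁, C₁.Trans Y a X₁ → C₁.Trans Y' a X₁ → g Y = g Y' →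
          Y ⊆ Y' := by
        intro Y Y' hY hY' he e₁ he₁
        have he₁X : e₁ ∈ X₁ := hY.2.2.1 he₁
        obtain ⟨e₂, hpf, _⟩ := hex1 e₁ he₁X
        have : e₂ ∈ g Y' := he ▸ ⟨e₁, he₁, hpf⟩
        obtain ⟨e₁', he₁', hpf'⟩ := this
        have he₂X : e₂ ∈ X₂ := (hdom _ hpf).2
        obtain ⟨w, _, huniq⟩ := hex2 e₂ he₂X
        have : e₁ = e₁' := (huniq e₁ hpf).trans (huniq e₁' hpf').symm
        exact this ▸ he₁'
      exact Set.Subset.antisymm (hsub _ _ hX' hX'' hgeq) (hsub _ _ hX'' hX' hgeq.symm)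
    show Set.ncard {X' | C₁.Trans X' a X₁} = Set.ncard {X' | C₂.Trans X' a X₂}
    rw [himg, Set.ncard_image_of_injOn hinj]
end

section
/- Proved transitions preserve well-formedness: if wf(P) and P →θ P', then wf(P'). -/
/-- Actions. -/
abbrev Act := ℕ

/-- Proof terms of the proved operational semantics. -/
inductive Theta : Type
  | act : Act → Theta
  | dot : Act → Theta → Theta
  | chl : Theta → Theta
  | chr : Theta → Theta
  | pl : Set Act → Theta → Theta
  | pr : Set Act → Theta → Theta
  | syn : Theta → Theta → Set Act → Theta

/-- The (partial) action-extraction function on proof terms. -/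
def actOf : Theta → Option Act
  | .act a => some a
  | .dot _ θ => actOf θ
  | .chl θ => actOf θ
  | .chr θ => actOf θ
  | .pl _ θ => actOf θ
  | .pr _ θ => actOf θ
  | .syn θ₁ θ₂ _ =>
      match actOf θ₁, actOf θ₂ with
      | some a, some b => if a = b then some a else none
      | _, _ => none

/-- Extended PRPC processes.  `done a ξ P` is the executed action prefix `a†ξ.P`,
    where `ξ` is either ε (`none`) or a synchronization proof term `⟨θ₁,θ₂⟩_L`. -/
inductive Proc : Type
  | nil : Proc
  | pre : Act → Proc → Proc
  | done : Act → Option Theta → Proc → Proc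
  | choice : Proc → Proc → Proc
  | par : Set Act → Proc → Proc → Proc

namespace Proc

/-- Initial processes: no † decoration occurs. -/
def initial : Proc → Bool
  | nil => true
  | pre _ P => initial P
  | done _ _ _ => false
  | choice P₁ P₂ => initial P₁ && initial P₂
  | par _ P₁ P₂ => initial P₁ && initial P₂

/-- Well-formed processes. -/
def wf : Proc → Bool
  | nil => true
  | pre _ P => initial P
  | done _ _ P => wf P
  | choice P₁ P₂ => (wf P₁ && initial P₂) || (initial P₁ && wf P₂)
  | par _ P₁ P₂ => wf P₁ && wf P₂

/-- Bring a process back to its initial version by removing all † decorations. -/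
def toinitial : Proc → Proc
  | nil => nil
  | pre a P => pre a (toinitial P)
  | done a _ P => pre a (toinitial P)
  | choice P₁ P₂ => choice (toinitial P₁) (toinitial P₂)
  | par L P₁ P₂ => par L (toinitial P₁) (toinitial P₂)

open Classical in
/-- Backward ready multiset of a process, as a multiplicity function over actions. -/
noncomputable def brm : Proc → Act → ℕ
  | nil => fun _ => 0
  | pre _ _ => fun _ => 0
  | done a _ P => if initial P then (fun b => if b = a then 1 else 0) else brm P
  | choice P₁ P₂ =>
      if initial P₁ then (if initial P₂ then fun _ => 0 else brm P₂)
      else if initial P₂ then brm P₁ else fun _ => 0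
  | par L P₁ P₂ => fun b =>
      (if b ∈ L then 0 else brm P₁ b) + (if b ∈ L then 0 else brm P₂ b) +
      (if b ∈ L then brm P₁ b * brm P₂ b else 0)

end Proc

/-- Enrichment of the †-decorations of the executed actions participating in a
    synchronization (partial function `enr'` of the paper). -/
def enr' : Proc → Theta → Theta → Option Proc
  | .nil, _, _ => some .nil
  | .pre _ _, _, _ => none
  | .done a ξ P', θ, tb =>
      match θ with
      | .act b => if b = a then some (.done a (some tb) P') else none
      | .dot b θ' => if b = a then (enr' P' θ' tb).map (.done a ξ) else none
      | _ => none
  | .choice P₁ P₂, θ, tb =>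
      match θ with
      | .chl θ' => (enr' P₁ θ' tb).map (fun Q => .choice Q P₂)
      | .chr θ' => (enr' P₂ θ' tb).map (fun Q => .choice P₁ Q)
      | _ => none
  | .par L P₁ P₂, θ, tb =>
      match θ with
      | .pl _ θ' => (enr' P₁ θ' tb).map (fun Q => .par L Q P₂)
      | .pr _ θ' => (enr' P₂ θ' tb).map (fun Q => .par L P₁ Q)
      | .syn θ₁ θ₂ _ =>
          match enr' P₁ θ₁ tb, enr' P₂ θ₂ tb with
          | some Q₁, some Q₂ => some (.par L Q₁ Q₂)
          | _, _ => none
      | _ => none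

/-- The proved transition relation of extended PRPC. -/
inductive Step : Proc → Theta → Proc → Prop
  | act_f {a : Act} {P : Proc} : P.initial → Step (.pre a P) (.act a) (.done a none P)
  | act_p {a : Act} {ξ : Option Theta} {P : Proc} {θ : Theta} {P' : Proc} :
      Step P θ P' → Step (.done a ξ P) (.dot a θ) (.done a ξ P')
  | cho_l {P₁ P₂ : Proc} {θ : Theta} {P₁' : Proc} :
      Step P₁ θ P₁' → P₂.initial → Step (.choice P₁ P₂) (.chl θ) (.choice P₁' P₂)
  | cho_r {P₁ P₂ : Proc} {θ : Theta} {P₂' : Proc} :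
      Step P₂ θ P₂' → P₁.initial → Step (.choice P₁ P₂) (.chr θ) (.choice P₁ P₂')
  | par_l {L : Set Act} {P₁ P₂ : Proc} {θ : Theta} {P₁' : Proc} :
      Step P₁ θ P₁' → (∀ a, actOf θ = some a → a ∉ L) →
      Step (.par L P₁ P₂) (.pl L θ) (.par L P₁' P₂)
  | par_r {L : Set Act} {P₁ P₂ : Proc} {θ : Theta} {P₂' : Proc} :
      Step P₂ θ P₂' → (∀ a, actOf θ = some a → a ∉ L) →
      Step (.par L P₁ P₂) (.pr L θ) (.par L P₁ P₂')
  | syn {L : Set Act} {P₁ P₂ : Proc} {θ₁ θ₂ : Theta} {P₁' P₂' : Proc} {a : Act} {Q : Proc} :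
      Step P₁ θ₁ P₁' → Step P₂ θ₂ P₂' →
      actOf θ₁ = some a → actOf θ₂ = some a → a ∈ L →
      enr' (.par L P₁' P₂') (.syn θ₁ θ₂ L) (.syn θ₁ θ₂ L) = some Q →
      Step (.par L P₁ P₂) (.syn θ₁ θ₂ L) Q

/-- Reachable processes: reachable from an initial process via proved transitions. -/
def Reachable (P : Proc) : Prop :=
  ∃ Q : Proc, Q.initial ∧ Relation.ReflTransGen (fun X Y => ∃ θ, Step X θ Y) Q P

/-- A brm-forward-reverse bisimulation over processes. -/
def IsFRBbrmBisim (B : Proc → Proc → Prop) : Prop :=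
  Symmetric B ∧
  ∀ Q₁ Q₂, B Q₁ Q₂ →
    (∀ θ₁ Q₁', Step Q₁ θ₁ Q₁' →
      ∃ θ₂ Q₂', Step Q₂ θ₂ Q₂' ∧ actOf θ₁ = actOf θ₂ ∧ B Q₁' Q₂') ∧
    (∀ θ₁ Q₁', Step Q₁' θ₁ Q₁ →
      ∃ θ₂ Q₂', Step Q₂' θ₂ Q₂ ∧ actOf θ₁ = actOf θ₂ ∧ B Q₁' Q₂') ∧
    Proc.brm Q₁ = Proc.brm Q₂

/-- Brm-forward-reverse bisimilarity over processes. -/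
def FRBbrm (P₁ P₂ : Proc) : Prop := ∃ B, IsFRBbrmBisim B ∧ B P₁ P₂

lemma Proc.initial_wf' : ∀ {P : Proc}, P.initial → P.wf := by
  intro P
  induction P with
  | nil => simp [Proc.wf]
  | pre a P ih => simp [Proc.wf, Proc.initial]
  | done _ _ _ _ => simp [Proc.initial]
  | choice A B ihA ihB =>
    simp [Proc.initial, Proc.wf]
    intro h1 h2; exact Or.inl ⟨ihA h1, h2⟩
  | par L A B ihA ihB =>
    simp [Proc.initial, Proc.wf]
    intro h1 h2; exact ⟨ihA h1, ihB h2⟩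

lemma enr'_initial : ∀ (P : Proc) (θ tb : Theta) (Q : Proc),
    P.initial → enr' P θ tb = some Q → Q.initial := by
  intro P
  induction P with
  | nil => intro θ tb Q _ h; simp [enr'] at h; subst h; simp [Proc.initial]
  | pre a P ih => intro θ tb Q _ h; simp [enr'] at h
  | done a ξ P ih => intro θ tb Q hi; simp [Proc.initial] at hi
  | choice P₁ P₂ ih₁ ih₂ =>
    intro θ tb Q hi h
    simp [Proc.initial] at hi
    cases θ with
    | chl θ' =>
      simp [enr'] at h
      obtain ⟨Q', hQ', rfl⟩ := h
      simp [Proc.initial, ih₁ θ' tb Q' hi.1 hQ', hi.2]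
    | chr θ' =>
      simp [enr'] at h
      obtain ⟨Q', hQ', rfl⟩ := h
      simp [Proc.initial, ih₂ θ' tb Q' hi.2 hQ', hi.1]
    | _ => simp [enr'] at h
  | par L P₁ P₂ ih₁ ih₂ =>
    intro θ tb Q hi h
    simp [Proc.initial] at hi
    cases θ with
    | pl L' θ' =>
      simp [enr'] at h
      obtain ⟨Q', hQ', rfl⟩ := h
      simp [Proc.initial, ih₁ θ' tb Q' hi.1 hQ', hi.2]
    | pr L' θ' =>
      simp [enr'] at h
      obtain ⟨Q', hQ', rfl⟩ := h
      simp [Proc.initial, ih₂ θ' tb Q' hi.2 hQ', hi.1]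
    | syn θ₁ θ₂ L' =>
      simp only [enr'] at h
      rcases h1 : enr' P₁ θ₁ tb with _ | Q₁ <;> rcases h2 : enr' P₂ θ₂ tb with _ | Q₂ <;>
        simp [h1, h2] at h
      subst h
      simp [Proc.initial, ih₁ θ₁ tb Q₁ hi.1 h1, ih₂ θ₂ tb Q₂ hi.2 h2]
    | _ => simp [enr'] at h

lemma enr'_wf : ∀ (P : Proc) (θ tb : Theta) (Q : Proc),
    P.wf → enr' P θ tb = some Q → Q.wf := by
  intro P
  induction P with
  | nil => intro θ tb Q _ h; simp [enr'] at h; subst h; simp [Proc.wf]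
  | pre a P ih => intro θ tb Q _ h; simp [enr'] at h
  | done a ξ P ih =>
    intro θ tb Q hw h
    cases θ with
    | act b =>
      simp [enr'] at h
      obtain ⟨rfl, rfl⟩ := h
      simpa [Proc.wf] using hw
    | dot b θ' =>
      simp [enr'] at h
      obtain ⟨rfl, Q', hQ', rfl⟩ := h
      simp only [Proc.wf] at hw ⊢
      exact ih θ' tb Q' hw hQ'
    | _ => simp [enr'] at h
  | choice P₁ P₂ ih₁ ih₂ =>
    intro θ tb Q hw h
    cases θ with
    | chl θ' =>
      simp [enr'] at h
      obtain ⟨Q', hQ', rfl⟩ := h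
      simp only [Proc.wf, Bool.or_eq_true, Bool.and_eq_true] at hw ⊢
      rcases hw with ⟨h1, h2⟩ | ⟨h1, h2⟩
      · exact Or.inl ⟨ih₁ θ' tb Q' h1 hQ', h2⟩
      · exact Or.inr ⟨enr'_initial P₁ θ' tb Q' h1 hQ', h2⟩
    | chr θ' =>
      simp [enr'] at h
      obtain ⟨Q', hQ', rfl⟩ := h
      simp only [Proc.wf, Bool.or_eq_true, Bool.and_eq_true] at hw ⊢
      rcases hw with ⟨h1, h2⟩ | ⟨h1, h2⟩
      · exact Or.inl ⟨h1, enr'_initial P₂ θ' tb Q' h2 hQ'⟩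
      · exact Or.inr ⟨h1, ih₂ θ' tb Q' h2 hQ'⟩
    | _ => simp [enr'] at h
  | par L P₁ P₂ ih₁ ih₂ =>
    intro θ tb Q hw h
    simp only [Proc.wf, Bool.and_eq_true] at hw
    cases θ with
    | pl L' θ' =>
      simp [enr'] at h
      obtain ⟨Q', hQ', rfl⟩ := h
      simp only [Proc.wf, Bool.and_eq_true]
      exact ⟨ih₁ θ' tb Q' hw.1 hQ', hw.2⟩
    | pr L' θ' =>
      simp [enr'] at h
      obtain ⟨Q', hQ', rfl⟩ := h
      simp only [Proc.wf, Bool.and_eq_true]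
      exact ⟨hw.1, ih₂ θ' tb Q' hw.2 hQ'⟩
    | syn θ₁ θ₂ L' =>
      simp only [enr'] at h
      rcases h1 : enr' P₁ θ₁ tb with _ | Q₁ <;> rcases h2 : enr' P₂ θ₂ tb with _ | Q₂ <;>
        simp [h1, h2] at h
      subst h
      simp only [Proc.wf, Bool.and_eq_true]
      exact ⟨ih₁ θ₁ tb Q₁ hw.1 h1, ih₂ θ₂ tb Q₂ hw.2 h2⟩
    | _ => simp [enr'] at h

/-- proved transitions preserve well-formedness. -/
theorem stmt7 (P : Proc) (θ : Theta) (P' : Proc)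
    (hP : P.wf) (hstep : Step P θ P') : P'.wf := by
  induction hstep with
  | act_f h => simp only [Proc.wf]; exact Proc.initial_wf' h
  | act_p h ih => simp only [Proc.wf] at hP ⊢; exact ih hP
  | cho_l h h2 ih =>
    simp only [Proc.wf, Bool.or_eq_true, Bool.and_eq_true] at hP ⊢
    rcases hP with ⟨h1, _⟩ | ⟨h1, hw⟩
    · exact Or.inl ⟨ih h1, h2⟩
    · exact Or.inl ⟨ih (Proc.initial_wf' h1), h2⟩
  | cho_r h h1 ih =>
    simp only [Proc.wf, Bool.or_eq_true, Bool.and_eq_true] at hP ⊢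
    rcases hP with ⟨hw, h2⟩ | ⟨_, h2⟩
    · exact Or.inr ⟨h1, ih (Proc.initial_wf' h2)⟩
    · exact Or.inr ⟨h1, ih h2⟩
  | par_l h _ ih =>
    simp only [Proc.wf, Bool.and_eq_true] at hP ⊢
    exact ⟨ih hP.1, hP.2⟩
  | par_r h _ ih =>
    simp only [Proc.wf, Bool.and_eq_true] at hP ⊢
    exact ⟨hP.1, ih hP.2⟩
  | syn h1 h2 _ _ _ henr ih1 ih2 =>
    simp only [Proc.wf, Bool.and_eq_true] at hP
    apply enr'_wf _ _ _ _ _ henr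
    simp only [Proc.wf, Bool.and_eq_true]
    exact ⟨ih1 hP.1, ih2 hP.2⟩
end

section
/- The process a.0 ∥_∅ a.0 is not brm-forward-reverse bisimilar to a.a.0: after two forward a-transitions, the first reaches a state with backward ready multiset ⦃a,a⦄ while the second reaches a state with backward ready multiset ⦃a⦄. -/
lemma brm_PP (a : Act) :
    Proc.brm (.par ∅ (.done a none .nil) (.done a none .nil)) =
      (fun b => if b = a then 2 else 0) := by
  funext b
  simp [Proc.brm, Proc.initial]
  split <;> rfl

lemma brm_QQ (a : Act) :
    Proc.brm (.done a none (.done a none .nil)) =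
      (fun b => if b = a then 1 else 0) := by
  funext b
  simp [Proc.brm, Proc.initial]

lemma step1 (a : Act) : Step (.par ∅ (.pre a .nil) (.pre a .nil)) (.pl ∅ (.act a))
    (.par ∅ (.done a none .nil) (.pre a .nil)) :=
  .par_l (.act_f rfl) (fun b _ => Set.notMem_empty b)

lemma step2 (a : Act) : Step (.par ∅ (.done a none .nil) (.pre a .nil)) (.pr ∅ (.act a))
    (.par ∅ (.done a none .nil) (.done a none .nil)) :=
  .par_r (.act_f rfl) (fun b _ => Set.notMem_empty b)

/-- `a.0 ∥_∅ a.0` is not brm-forward-reverse bisimilar to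
`a.a.0`: after two forward `a`-transitions, the former reaches a state with
backward ready multiset ⦃a,a⦄ while the latter reaches a state with backward
ready multiset ⦃a⦄. -/
theorem stmt9 (a : Act) :
    ¬ FRBbrm (.par ∅ (.pre a .nil) (.pre a .nil)) (.pre a (.pre a .nil)) ∧
    (∃ θ₁ θ₂ P₁, Step (.par ∅ (.pre a .nil) (.pre a .nil)) θ₁ P₁ ∧
      Step P₁ θ₂ (.par ∅ (.done a none .nil) (.done a none .nil)) ∧
      actOf θ₁ = some a ∧ actOf θ₂ = some a) ∧
    (∃ θ₁ θ₂ Q₁, Step (.pre a (.pre a .nil)) θ₁ Q₁ ∧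
      Step Q₁ θ₂ (.done a none (.done a none .nil)) ∧
      actOf θ₁ = some a ∧ actOf θ₂ = some a) ∧
    Proc.brm (.par ∅ (.done a none .nil) (.done a none .nil)) =
      (fun b => if b = a then 2 else 0) ∧
    Proc.brm (.done a none (.done a none .nil)) =
      (fun b => if b = a then 1 else 0) := by
  refine ⟨?_, ⟨_, _, _, step1 a, step2 a, rfl, rfl⟩,
    ⟨.act a, .dot a (.act a), _, .act_f rfl, .act_p (.act_f rfl), rfl, rfl⟩,
    brm_PP a, brm_QQ a⟩
  rintro ⟨B, ⟨hsym, hB⟩, hPQ⟩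
  obtain ⟨θ₂, Q₂, hs2, -, hB1⟩ := ((hB _ _ hPQ).1 _ _ (step1 a))
  cases hs2 with
  | act_f h =>
    obtain ⟨θ₃, Q₃, hs3, -, hB2⟩ := ((hB _ _ hB1).1 _ _ (step2 a))
    cases hs3 with
    | act_p h3 =>
      cases h3 with
      | act_f h4 =>
        have := (hB _ _ hB2).2.2
        rw [brm_PP a, brm_QQ a] at this
        have := congrFun this a
        simp at this
end

section
/- If two processes are brm-forward-reverse bisimilar and one satisfies a formula φ of the backward ready multiset logic, then so does the other (soundness direction of the logical characterization), proved by induction on the depth of φ. -/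
/-- Formulas of the backward ready multiset logic ℒ_BRM. -/
inductive Formula : Type
  | tt : Formula
  | mult : (Act → ℕ) → Formula
  | neg : Formula → Formula
  | conj : Formula → Formula → Formula
  | diaF : Act → Formula → Formula
  | diaB : Act → Formula → Formula

/-- Satisfaction of ℒ_BRM formulas over processes. -/
def Sat : Proc → Formula → Prop
  | _, .tt => True
  | P, .mult M => Proc.brm P = M
  | P, .neg φ => ¬ Sat P φ
  | P, .conj φ ψ => Sat P φ ∧ Sat P ψ
  | P, .diaF a φ => ∃ θ P', Step P θ P' ∧ actOf θ = some a ∧ Sat P' φ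
  | P, .diaB a φ => ∃ θ P', Step P' θ P ∧ actOf θ = some a ∧ Sat P' φ


theorem frbbrm_symm {P Q : Proc} (h : FRBbrm P Q) : FRBbrm Q P := by
  obtain ⟨B, hB, hPQ⟩ := h
  exact ⟨B, hB, hB.1 hPQ⟩

theorem stmt12_aux (φ : Formula) : ∀ P₁ P₂ : Proc,
    FRBbrm P₁ P₂ → Sat P₁ φ → Sat P₂ φ := by
  induction φ with
  | tt => intro _ _ _ _; trivial
  | mult M =>
    intro P₁ P₂ h hs
    obtain ⟨B, hB, hPQ⟩ := h
    have := (hB.2 _ _ hPQ).2.2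
    simpa [Sat, ← this] using hs
  | neg φ ih =>
    intro P₁ P₂ h hs hs2
    exact hs (ih P₂ P₁ (frbbrm_symm h) hs2)
  | conj φ ψ ihφ ihψ =>
    intro P₁ P₂ h hs
    exact ⟨ihφ P₁ P₂ h hs.1, ihψ P₁ P₂ h hs.2⟩
  | diaF a φ ih =>
    intro P₁ P₂ h hs
    obtain ⟨B, hB, hPQ⟩ := h
    obtain ⟨θ, P₁', hstep, ha, hsφ⟩ := hs
    obtain ⟨θ₂, P₂', hstep₂, hact, hB'⟩ := (hB.2 _ _ hPQ).1 θ P₁' hstep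
    exact ⟨θ₂, P₂', hstep₂, hact ▸ ha, ih P₁' P₂' ⟨B, hB, hB'⟩ hsφ⟩
  | diaB a φ ih =>
    intro P₁ P₂ h hs
    obtain ⟨B, hB, hPQ⟩ := h
    obtain ⟨θ, P₁', hstep, ha, hsφ⟩ := hs
    obtain ⟨θ₂, P₂', hstep₂, hact, hB'⟩ := (hB.2 _ _ hPQ).2.1 θ P₁' hstep
    exact ⟨θ₂, P₂', hstep₂, hact ▸ ha, ih P₁' P₂' ⟨B, hB, hB'⟩ hsφ⟩

/-- if two processes are brm-forward-reverse bisimilar and one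
satisfies a formula of ℒ_BRM, then so does the other. -/
theorem stmt12 (P₁ P₂ : Proc) (φ : Formula)
    (h : FRBbrm P₁ P₂) (hsat : Sat P₁ φ) : Sat P₂ φ := by
  exact stmt12_aux φ P₁ P₂ h hsat
end

section
/- The alternative composition of stable configuration structures is stable: if C₁ and C₂ are stable then C₁ + C₂ is stable. -/
/-- Alternative composition of configuration structures: events are the tagged
disjoint union (`Sum.inl` = left tag `+l`, `Sum.inr` = right tag `+r`), and
every configuration comes entirely from one of the two components. -/
def csSum {E₁ E₂ A : Type*} (C₁ : CS E₁ A) (C₂ : CS E₂ A) : CS (E₁ ⊕ E₂) A where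
  Configs := {Y | ∃ X ∈ C₁.Configs, Y = Sum.inl '' X} ∪
             {Y | ∃ X ∈ C₂.Configs, Y = Sum.inr '' X}
  label := Sum.elim C₁.label C₂.label

/-!
A configuration of `C₁ + C₂` lies entirely on one side, and any configuration below a
left-sided one is itself left-sided, the only configuration on both sides being `∅`. So
finiteness, rootedness and connectedness transfer side by side, and a bounded union or
intersection in `C₁ + C₂` is the image of a bounded union or intersection in one component.
-/

open Set

namespace CS

variable {E₁ E₂ A : Type*}

section Components

variable {E : Type*}

def ConfigsFinite (C : CS E A) : Prop :=
  ∀ X ∈ C.Configs, X.Finite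

def Connected (C : CS E A) : Prop :=
  ∀ X ∈ C.Configs, X ≠ ∅ → ∃ e ∈ X, X \ {e} ∈ C.Configs

def BoundedClosed (C : CS E A) : Prop :=
  ∀ X ∈ C.Configs, ∀ Y ∈ C.Configs, ∀ Z ∈ C.Configs, X ∪ Y ⊆ Z →
    X ∪ Y ∈ C.Configs ∧ X ∩ Y ∈ C.Configs

theorem stable_iff (C : CS E A) :
    C.Stable ↔ C.ConfigsFinite ∧ ∅ ∈ C.Configs ∧ C.Connected ∧ C.BoundedClosed :=
  Iff.rfl

end Components

variable {C₁ : CS E₁ A} {C₂ : CS E₂ A}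

theorem image_inl_mem_csSum {X : Set E₁} (hX : X ∈ C₁.Configs) :
    Sum.inl '' X ∈ (csSum C₁ C₂).Configs :=
  Or.inl ⟨X, hX, rfl⟩

theorem image_inr_mem_csSum {X : Set E₂} (hX : X ∈ C₂.Configs) :
    Sum.inr '' X ∈ (csSum C₁ C₂).Configs :=
  Or.inr ⟨X, hX, rfl⟩

theorem empty_mem_csSum (h : ∅ ∈ C₁.Configs) : ∅ ∈ (csSum C₁ C₂).Configs := by
  simpa using image_inl_mem_csSum (C₂ := C₂) h

theorem ConfigsFinite.csSum (h₁ : C₁.ConfigsFinite) (h₂ : C₂.ConfigsFinite) :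
    (csSum C₁ C₂).ConfigsFinite := by
  rintro _ (⟨X, hX, rfl⟩ | ⟨X, hX, rfl⟩)
  exacts [(h₁ X hX).image _, (h₂ X hX).image _]

theorem Connected.csSum (h₁ : C₁.Connected) (h₂ : C₂.Connected) :
    (csSum C₁ C₂).Connected := by
  rintro _ (⟨X, hX, rfl⟩ | ⟨X, hX, rfl⟩) hne
  · obtain ⟨e, he, hXe⟩ := h₁ X hX (by simpa using hne)
    refine ⟨Sum.inl e, mem_image_of_mem _ he, ?_⟩
    rw [← image_singleton, ← image_sdiff Sum.inl_injective]
    exact image_inl_mem_csSum hXe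
  · obtain ⟨e, he, hXe⟩ := h₂ X hX (by simpa using hne)
    refine ⟨Sum.inr e, mem_image_of_mem _ he, ?_⟩
    rw [← image_singleton, ← image_sdiff Sum.inr_injective]
    exact image_inr_mem_csSum hXe

theorem exists_eq_image_inl_of_subset (h : ∅ ∈ C₁.Configs)
    {X : Set (E₁ ⊕ E₂)} (hX : X ∈ (csSum C₁ C₂).Configs) {Z : Set E₁}
    (hXZ : X ⊆ Sum.inl '' Z) : ∃ X₁ ∈ C₁.Configs, X₁ ⊆ Z ∧ X = Sum.inl '' X₁ := by
  rcases hX with ⟨X₁, hX₁, rfl⟩ | ⟨X₂, -, rfl⟩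
  · exact ⟨X₁, hX₁, (image_subset_image_iff Sum.inl_injective).1 hXZ, rfl⟩
  · have : X₂ = ∅ := eq_empty_of_forall_notMem fun x hx => by
      obtain ⟨z, -, hz⟩ := hXZ (mem_image_of_mem _ hx)
      exact Sum.inl_ne_inr hz
    exact ⟨∅, h, empty_subset Z, by simp [this]⟩

theorem exists_eq_image_inr_of_subset (h : ∅ ∈ C₂.Configs)
    {X : Set (E₁ ⊕ E₂)} (hX : X ∈ (csSum C₁ C₂).Configs) {Z : Set E₂}
    (hXZ : X ⊆ Sum.inr '' Z) : ∃ X₂ ∈ C₂.Configs, X₂ ⊆ Z ∧ X = Sum.inr '' X₂ := by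
  rcases hX with ⟨X₁, -, rfl⟩ | ⟨X₂, hX₂, rfl⟩
  · have : X₁ = ∅ := eq_empty_of_forall_notMem fun x hx => by
      obtain ⟨z, -, hz⟩ := hXZ (mem_image_of_mem _ hx)
      exact Sum.inr_ne_inl hz
    exact ⟨∅, h, empty_subset Z, by simp [this]⟩
  · exact ⟨X₂, hX₂, (image_subset_image_iff Sum.inr_injective).1 hXZ, rfl⟩

theorem BoundedClosed.csSum (h₁ : C₁.BoundedClosed) (hr₁ : ∅ ∈ C₁.Configs)
    (h₂ : C₂.BoundedClosed) (hr₂ : ∅ ∈ C₂.Configs) : (csSum C₁ C₂).BoundedClosed := by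
  intro X hX Y hY Z hZ hXYZ
  obtain ⟨hXZ, hYZ⟩ := union_subset_iff.1 hXYZ
  rcases hZ with ⟨Z₁, hZ₁, rfl⟩ | ⟨Z₂, hZ₂, rfl⟩
  · obtain ⟨X₁, hX₁, hXZ₁, rfl⟩ := exists_eq_image_inl_of_subset hr₁ hX hXZ
    obtain ⟨Y₁, hY₁, hYZ₁, rfl⟩ := exists_eq_image_inl_of_subset hr₁ hY hYZ
    obtain ⟨hU, hI⟩ := h₁ X₁ hX₁ Y₁ hY₁ Z₁ hZ₁ (union_subset hXZ₁ hYZ₁)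
    rw [← image_union, ← image_inter Sum.inl_injective]
    exact ⟨image_inl_mem_csSum hU, image_inl_mem_csSum hI⟩
  · obtain ⟨X₂, hX₂, hXZ₂, rfl⟩ := exists_eq_image_inr_of_subset hr₂ hX hXZ
    obtain ⟨Y₂, hY₂, hYZ₂, rfl⟩ := exists_eq_image_inr_of_subset hr₂ hY hYZ
    obtain ⟨hU, hI⟩ := h₂ X₂ hX₂ Y₂ hY₂ Z₂ hZ₂ (union_subset hXZ₂ hYZ₂)
    rw [← image_union, ← image_inter Sum.inr_injective]
    exact ⟨image_inr_mem_csSum hU, image_inr_mem_csSum hI⟩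

end CS

/-- the alternative composition of stable configuration
structures is stable. -/
theorem stmt14 {E₁ E₂ A : Type*} (C₁ : CS E₁ A) (C₂ : CS E₂ A)
    (h₁ : C₁.Stable) (h₂ : C₂.Stable) : (csSum C₁ C₂).Stable := by
  obtain ⟨fin₁, root₁, conn₁, closed₁⟩ := (CS.stable_iff C₁).1 h₁
  obtain ⟨fin₂, root₂, conn₂, closed₂⟩ := (CS.stable_iff C₂).1 h₂
  exact (CS.stable_iff _).2 ⟨fin₁.csSum fin₂, CS.empty_mem_csSum root₁, conn₁.csSum conn₂,
    closed₁.csSum root₁ closed₂ root₂⟩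
end
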